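/- arXiv:2404.07486 — 5 statements merged into one kernel-verified Lean document; each statement's English description precedes it below -/
import Mathlib

section
/- Let G be a triangle-free simple graph on n vertices with n ≥ 90. If the chromatic number of G is at least 4, then e(G) ≤ ⌊(n−3)²/4⌋ + 5. -/
/-!
Let `v` be a vertex of maximum degree `Δ`. Its neighbourhood `A` is independent because `G` is
triangle-free, so `χ(G) ≥ 4` forces `G - A` to be non-bipartite. A shortest odd closed walk of
`G - A` is an induced odd cycle `C` of length `2k + 1 ≥ 5`. Every vertex of `A` sees at most `k`
vertices of `C` (no two consecutive ones, as `G` is triangle-free), `C` spans `2k + 1` edges and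
the remaining `d = n - Δ - (2k + 1)` vertices have degree at most `Δ`; hence
`e(G) ≤ kΔ + (2k + 1) + dΔ`, and AM-GM bounds this by `⌊(n - 3)² / 4⌋ + 5`.
-/

open Finset Function

theorem Finset.sum_range_add_one_eq_of_eq {M : Type*} [AddCancelCommMonoid M] {u : ℕ → M}
    {g : ℕ} (h : u g = u 0) : ∑ i ∈ range g, u (i + 1) = ∑ i ∈ range g, u i := by
  have := (sum_range_succ u g).symm.trans (sum_range_succ' u g)
  rwa [h, add_left_inj, eq_comm] at this

theorem Function.Periodic.exists_lt_apply_eq_add {α : Type*} {f : ℕ → α} {g : ℕ}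
    (hf : Periodic f g) (hg : 0 < g) (i j : ℕ) : ∃ d < g, f j = f (i + d) := by
  refine ⟨(j + (g - i % g)) % g, Nat.mod_lt _ hg, ?_⟩
  rw [← hf.map_mod_nat j, ← hf.map_mod_nat (i + _), Nat.add_mod_mod, ← Nat.mod_add_mod,
    show i % g + (j + (g - i % g)) = j + g by have := Nat.mod_lt i hg; omega, Nat.add_mod_right]

theorem Nat.mul_add_le_sq_div_four_add_five {a d k : ℕ} (hk : 2 ≤ k) (h : 4 ≤ a + k + d) :
    k * a + (2 * k + 1) + d * a ≤ (a + (2 * k + 1) + d - 3) ^ 2 / 4 + 5 := by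
  obtain ⟨j, rfl⟩ := Nat.exists_eq_add_of_le hk
  rw [show a + (2 * (2 + j) + 1) + d - 3 = a + (2 + j + d) + j by omega]
  have hamgm : 4 * (a * (2 + j + d)) ≤ (a + (2 + j + d)) ^ 2 := by
    nlinarith [sq_nonneg ((a : ℤ) - (2 + j + d))]
  suffices 4 * ((2 + j) * a + (2 * (2 + j) + 1) + d * a) ≤ (a + (2 + j + d) + j) ^ 2 + 20 by
    omega
  nlinarith

namespace SimpleGraph

variable {V W : Type*}

/-- A closed walk of length `g`, encoded as the `g`-periodic sequence of its vertices. -/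
structure IsPeriodicWalk (G : SimpleGraph V) (g : ℕ) (f : ℕ → V) : Prop where
  periodic : Periodic f g
  adj : ∀ i, G.Adj (f i) (f (i + 1))

/-- `eq_of_adj` says that the cycle has no chords. -/
structure IsInducedOddCycle (G : SimpleGraph V) (g : ℕ) (f : ℕ → V) : Prop
    extends G.IsPeriodicWalk g f where
  odd : Odd g
  injOn : Set.InjOn f (range g)
  eq_of_adj : ∀ i j, G.Adj (f i) (f j) → f j = f (i + 1) ∨ f j = f (i + (g - 1))

section PeriodicWalk

variable {G : SimpleGraph V} {g : ℕ} {f : ℕ → V}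

theorem isPeriodicWalk_of_adj {s d : ℕ} (hf : ∀ i < d, G.Adj (f (s + i)) (f (s + (i + 1))))
    (h : G.Adj (f (s + d)) (f s)) :
    G.IsPeriodicWalk (d + 1) (fun i => f (s + i % (d + 1))) := by
  have hper : Periodic (fun i => f (s + i % (d + 1))) (d + 1) := fun i => by simp
  refine ⟨hper, fun i => ?_⟩
  -- by periodicity it suffices to treat `i ≤ d`
  rw [← hper.map_mod_nat i, ← hper.map_mod_nat (i + 1), ← Nat.mod_add_mod]
  have hi : i % (d + 1) ≤ d := Nat.lt_succ_iff.mp (Nat.mod_lt _ d.succ_pos)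
  rcases hi.lt_or_eq with hi | hi
  · simpa [Nat.mod_eq_of_lt hi, Nat.mod_eq_of_lt (Nat.succ_lt_succ hi)] using hf _ hi
  · simpa [hi] using h

theorem IsPeriodicWalk.of_apply_add_eq (hf : G.IsPeriodicWalk g f) {s d : ℕ} (hd : 0 < d)
    (h : f (s + d) = f s) : G.IsPeriodicWalk d (fun i => f (s + i % d)) := by
  obtain ⟨d, rfl⟩ := Nat.exists_eq_add_of_lt hd
  simp only [zero_add] at h ⊢
  exact isPeriodicWalk_of_adj (fun i _ => hf.adj _) (h ▸ hf.adj (s + d))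

theorem IsPeriodicWalk.map {G' : SimpleGraph W} (hf : G.IsPeriodicWalk g f) (φ : G →g G') :
    G'.IsPeriodicWalk g (φ ∘ f) :=
  ⟨fun i => congrArg φ (hf.periodic i), fun i => φ.map_adj (hf.adj i)⟩

theorem Walk.isPeriodicWalk_getVert {u : V} (w : G.Walk u u) (hw : w.length ≠ 0) :
    G.IsPeriodicWalk w.length (fun i => w.getVert (i % w.length)) := by
  obtain ⟨d, hd⟩ : ∃ d, w.length = d + 1 := ⟨w.length - 1, by omega⟩
  have hclose : G.Adj (w.getVert (0 + d)) (w.getVert 0) := by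
    simpa [← hd] using w.adj_getVert_succ (i := d) (by omega)
  simpa [hd] using isPeriodicWalk_of_adj (s := 0)
    (fun i hi => by simpa using w.adj_getVert_succ (i := i) (by omega)) hclose

theorem exists_odd_isPeriodicWalk (h : ¬G.Colorable 2) : ∃ g f, Odd g ∧ G.IsPeriodicWalk g f := by
  obtain ⟨u, w, hw⟩ : ∃ u, ∃ w : G.Walk u u, Odd w.length := by
    simpa [two_colorable_iff_forall_loop_even] using h
  exact ⟨_, _, hw, w.isPeriodicWalk_getVert hw.pos.ne'⟩

/- In the next two lemmas, a repeated vertex (resp. a chord) splits the walk into two closed walks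
of lengths adding up to `g` (resp. `g + 2`); one of them is odd, and both are shorter than `g`. -/

theorem IsPeriodicWalk.apply_ne_of_minimal (hf : G.IsPeriodicWalk g f) (hg : Odd g)
    (hmin : ∀ m < g, ∀ f' : ℕ → V, G.IsPeriodicWalk m f' → Even m) {i j : ℕ} (hij : i < j)
    (hj : j < i + g) : f j ≠ f i := by
  intro h
  have hfwd : f (i + (j - i)) = f i := by rwa [Nat.add_sub_cancel' hij.le]
  have hback : f (j + (i + g - j)) = f j := by
    rw [show j + (i + g - j) = i + g by omega, hf.periodic, h]
  obtain ⟨r, hr⟩ := hmin (j - i) (by omega) _ (hf.of_apply_add_eq (by omega) hfwd)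
  obtain ⟨t, ht⟩ := hmin (i + g - j) (by omega) _ (hf.of_apply_add_eq (by omega) hback)
  obtain ⟨q, hq⟩ := hg
  omega

theorem IsPeriodicWalk.eq_one_or_of_minimal (hf : G.IsPeriodicWalk g f) (hg : Odd g)
    (hmin : ∀ m < g, ∀ f' : ℕ → V, G.IsPeriodicWalk m f' → Even m) {i d : ℕ} (hdg : d < g)
    (h : G.Adj (f i) (f (i + d))) : d = 1 ∨ d = g - 1 := by
  have hd : d ≠ 0 := by rintro rfl; exact G.irrefl h
  have hback : G.Adj (f (i + d + (g - d))) (f (i + d)) := by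
    rwa [show i + d + (g - d) = i + g by omega, hf.periodic]
  by_contra hne
  obtain ⟨r, hr⟩ := hmin (d + 1) (by omega) _ (isPeriodicWalk_of_adj (fun j _ => hf.adj _) h.symm)
  obtain ⟨t, ht⟩ := hmin (g - d + 1) (by omega) _
    (isPeriodicWalk_of_adj (fun j _ => hf.adj _) hback)
  obtain ⟨q, hq⟩ := hg
  omega

theorem exists_isInducedOddCycle (h : ¬G.Colorable 2) : ∃ g f, G.IsInducedOddCycle g f := by
  classical
  have hex := exists_odd_isPeriodicWalk h
  obtain ⟨f, hg, hf⟩ := Nat.find_spec hex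
  have hmin : ∀ m < Nat.find hex, ∀ f', G.IsPeriodicWalk m f' → Even m :=
    fun m hm f' hf' => Nat.not_odd_iff_even.mp fun ho => Nat.find_min hex hm ⟨f', ho, hf'⟩
  refine ⟨_, f, ⟨hf, hg, fun i hi j hj hij => ?_, fun i j hij => ?_⟩⟩
  · simp only [coe_range, Set.mem_Iio] at hi hj
    by_contra hne
    rcases Nat.lt_or_gt_of_ne hne with hlt | hlt
    · exact hf.apply_ne_of_minimal hg hmin hlt (by omega) hij.symm
    · exact hf.apply_ne_of_minimal hg hmin hlt (by omega) hij
  · obtain ⟨d, hd, hj⟩ := hf.periodic.exists_lt_apply_eq_add hg.pos i j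
    rw [hj] at hij ⊢
    rcases hf.eq_one_or_of_minimal hg hmin hd hij with rfl | rfl
    · exact .inl rfl
    · exact .inr rfl

theorem IsInducedOddCycle.map {G' : SimpleGraph W} (hf : G.IsInducedOddCycle g f) (φ : G ↪g G') :
    G'.IsInducedOddCycle g (φ ∘ f) where
  toIsPeriodicWalk := hf.toIsPeriodicWalk.map φ.toHom
  odd := hf.odd
  injOn := φ.injective.comp_injOn hf.injOn
  eq_of_adj i j h := (hf.eq_of_adj i j (φ.map_adj_iff.mp h)).imp (congrArg φ) (congrArg φ)

theorem IsPeriodicWalk.five_le (hf : G.IsPeriodicWalk g f) (hg : Odd g) (htf : G.CliqueFree 3) :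
    5 ≤ g := by
  classical
  obtain ⟨k, rfl⟩ := hg
  have hwrap : f (2 * k + 1) = f 0 := by simpa using hf.periodic 0
  rcases (show k = 0 ∨ k = 1 ∨ 2 ≤ k by omega) with rfl | rfl | hk
  · exact absurd (hwrap ▸ hf.adj 0) G.irrefl
  · exact absurd (is3Clique_triple_iff.mpr ⟨hf.adj 0, hwrap ▸ (hf.adj 2).symm, hf.adj 1⟩)
      (htf {f 0, f 1, f 2})
  · omega

theorem IsPeriodicWalk.two_mul_card_filter_adj_le [DecidableEq V] [DecidableRel G.Adj]
    (hf : G.IsPeriodicWalk g f) (htf : G.CliqueFree 3) (a : V) :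
    2 * #{y ∈ (range g).image f | G.Adj a y} ≤ g := by
  set S := {i ∈ range g | G.Adj a (f i)}
  have hshift : #{i ∈ range g | G.Adj a (f (i + 1))} = #S := by
    simp only [S, card_filter]
    exact sum_range_add_one_eq_of_eq (u := fun i => if G.Adj a (f i) then 1 else 0)
      (by rw [show f g = f 0 by simpa using hf.periodic 0])
  have hdisj : Disjoint S {i ∈ range g | G.Adj a (f (i + 1))} :=
    disjoint_filter.2 fun i _ h₁ h₂ => htf {a, f i, f (i + 1)}
      (is3Clique_triple_iff.mpr ⟨h₁, h₂, hf.adj i⟩)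
  calc 2 * #{y ∈ (range g).image f | G.Adj a y}
      ≤ 2 * #S := by rw [filter_image]; gcongr; exact card_image_le
    _ = #(S ∪ {i ∈ range g | G.Adj a (f (i + 1))}) := by rw [card_union_of_disjoint hdisj]; omega
    _ ≤ #(range g) := card_le_card (union_subset (filter_subset _ _) (filter_subset _ _))
    _ = g := card_range g

theorem IsInducedOddCycle.card_filter_adj_le_two [DecidableEq V] [DecidableRel G.Adj]
    (hf : G.IsInducedOddCycle g f) :
    ∀ c ∈ (range g).image f, #{y ∈ (range g).image f | G.Adj c y} ≤ 2 := by
  simp only [mem_image]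
  rintro _ ⟨i, -, rfl⟩
  refine (card_le_card (t := {f (i + 1), f (i + (g - 1))}) fun y hy => ?_).trans card_le_two
  obtain ⟨⟨j, -, rfl⟩, hij⟩ := by simpa using hy
  simpa using hf.eq_of_adj i j hij

end PeriodicWalk

theorem IsIndepSet.colorable_add_one {G : SimpleGraph V} {s : Set V} {n : ℕ}
    (hs : G.IsIndepSet s) (h : (G.induce sᶜ).Colorable n) : G.Colorable (n + 1) := by
  classical
  obtain ⟨c⟩ := h
  let C : G.Coloring (Option (Fin n)) :=
    Coloring.mk (fun x => if hx : x ∈ s then none else some (c ⟨x, hx⟩)) fun {x y} hxy => by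
      by_cases hx : x ∈ s <;> by_cases hy : y ∈ s <;> simp only [hx, hy, dite_true, dite_false,
        ne_eq, reduceCtorEq, not_false_eq_true, Option.some.injEq]
      · exact (hs hx hy (G.ne_of_adj hxy) hxy).elim
      · exact c.valid hxy
  simpa using C.colorable

theorem exists_isInducedOddCycle_of_isIndepSet {G : SimpleGraph V} {s : Set V}
    (hs : G.IsIndepSet s) (h : ¬G.Colorable 3) :
    ∃ g f, G.IsInducedOddCycle g f ∧ ∀ i, f i ∉ s := by
  obtain ⟨g, f, hf⟩ := exists_isInducedOddCycle fun h₂ => h (hs.colorable_add_one h₂)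
  exact ⟨g, _, hf.map (Embedding.induce _), fun i => (f i).2⟩

section Counting

variable (G : SimpleGraph V) [DecidableRel G.Adj]

theorem sum_card_filter_adj_comm (s t : Finset V) :
    ∑ x ∈ s, #{y ∈ t | G.Adj x y} = ∑ y ∈ t, #{x ∈ s | G.Adj y x} := by
  simpa only [bipartiteAbove, bipartiteBelow, G.adj_comm] using
    sum_card_bipartiteAbove_eq_sum_card_bipartiteBelow G.Adj (s := s) (t := t)

variable [Fintype V] [DecidableEq V]

theorem degree_eq_card_filter_adj_add (S : Finset V) (x : V) :
    G.degree x = #{y ∈ S | G.Adj x y} + #{y ∈ Sᶜ | G.Adj x y} := by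
  rw [← card_neighborFinset_eq_degree, neighborFinset_eq_filter,
    ← card_union_of_disjoint (disjoint_filter_filter disjoint_compl_right), ← filter_union,
    union_compl]

theorem two_mul_card_edgeFinset_le (S : Finset V) :
    2 * #G.edgeFinset ≤ ∑ x ∈ S, #{y ∈ S | G.Adj x y} + 2 * ∑ x ∈ Sᶜ, G.degree x := by
  have hS : ∑ x ∈ S, G.degree x
      = ∑ x ∈ S, #{y ∈ S | G.Adj x y} + ∑ x ∈ S, #{y ∈ Sᶜ | G.Adj x y} := by
    rw [← sum_add_distrib]
    exact sum_congr rfl fun x _ => degree_eq_card_filter_adj_add G S x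
  have hout : ∑ x ∈ S, #{y ∈ Sᶜ | G.Adj x y} ≤ ∑ x ∈ Sᶜ, G.degree x := by
    rw [sum_card_filter_adj_comm]
    exact sum_le_sum fun x _ => (degree_eq_card_filter_adj_add G S x).symm ▸ le_self_add
  rw [← sum_degrees_eq_twice_card_edges, ← sum_add_sum_compl S, hS]
  omega

theorem card_edgeFinset_le_of_isIndepSet {A C : Finset V} {k : ℕ} (hA : G.IsIndepSet A)
    (hAC : Disjoint A C) (hAC' : ∀ a ∈ A, #{y ∈ C | G.Adj a y} ≤ k)
    (hC : ∀ c ∈ C, #{y ∈ C | G.Adj c y} ≤ 2) :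
    #G.edgeFinset ≤ k * #A + #C + #(A ∪ C)ᶜ * G.maxDegree := by
  have hAA : ∀ a ∈ A, #{y ∈ A | G.Adj a y} = 0 := fun a ha =>
    card_eq_zero.2 (filter_eq_empty_iff.2 fun y hy h => hA ha hy (G.ne_of_adj h) h)
  have hsplit : ∀ x, #{y ∈ A ∪ C | G.Adj x y} = #{y ∈ A | G.Adj x y} + #{y ∈ C | G.Adj x y} :=
    fun x => by rw [filter_union, card_union_of_disjoint (disjoint_filter_filter hAC)]
  have hAsum := sum_le_card_nsmul A _ k hAC'
  have hCsum := sum_le_card_nsmul C _ 2 hC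
  have hin : ∑ x ∈ A ∪ C, #{y ∈ A ∪ C | G.Adj x y} ≤ 2 * (k * #A) + 2 * #C := by
    rw [sum_union hAC]
    simp only [hsplit, sum_add_distrib]
    rw [sum_congr rfl hAA, sum_card_filter_adj_comm G C A]
    simp only [smul_eq_mul, sum_const_zero] at hAsum hCsum ⊢
    linarith
  have hout : ∑ x ∈ (A ∪ C)ᶜ, G.degree x ≤ #(A ∪ C)ᶜ * G.maxDegree := by
    simpa using sum_le_card_nsmul _ _ _ fun x _ => G.degree_le_maxDegree x
  have := two_mul_card_edgeFinset_le G (A ∪ C)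
  omega

end Counting

end SimpleGraph

open SimpleGraph

theorem stmt_0 {V : Type*} [Fintype V] (G : SimpleGraph V) [DecidableRel G.Adj]
    (hn : 90 ≤ Fintype.card V) (htf : G.CliqueFree 3)
    (hchi : 4 ≤ G.chromaticNumber) :
    G.edgeFinset.card ≤ (Fintype.card V - 3) ^ 2 / 4 + 5 := by
  classical
  have : Nonempty V := Fintype.card_pos_iff.mp (by omega)
  obtain ⟨v, hv⟩ := G.exists_maximal_degree_vertex
  set A := G.neighborFinset v
  have hA : G.IsIndepSet A := by
    simpa [A] using isIndepSet_neighborSet_of_triangleFree G htf v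
  have hAΔ : #A = G.maxDegree := by rw [card_neighborFinset_eq_degree, hv]
  have h3 : ¬G.Colorable 3 := fun h3 =>
    absurd (hchi.trans h3.chromaticNumber_le) (by norm_num)
  obtain ⟨_, f, hf, hfA⟩ := exists_isInducedOddCycle_of_isIndepSet hA h3
  obtain ⟨k, rfl⟩ := hf.odd
  have h5 := hf.five_le hf.odd htf
  set C := (range (2 * k + 1)).image f
  have hC : #C = 2 * k + 1 := by rw [card_image_of_injOn hf.injOn, card_range]
  have hAC : Disjoint A C := disjoint_right.2 fun x hx => by
    obtain ⟨i, -, rfl⟩ := mem_image.1 hx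
    exact hfA i
  have hm := card_edgeFinset_le_of_isIndepSet G hA hAC (k := k)
    (fun a _ => by have : 2 * #{y ∈ C | G.Adj a y} ≤ _ := hf.two_mul_card_filter_adj_le htf a; omega)
    hf.card_filter_adj_le_two
  have hn := card_add_card_compl (A ∪ C)
  rw [card_union_of_disjoint hAC, hC, hAΔ] at hn
  rw [hC, hAΔ] at hm
  rw [← hn]
  exact hm.trans (Nat.mul_add_le_sq_div_four_add_five (by omega) (by omega))
end

section
/- For every n ≥ 13 there exists a triangle-free simple graph G on n vertices with chromatic number exactly 4 and exactly ⌊(n−3)²/4⌋ + 5 edges. -/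
/-!
The Grötzsch graph, the Mycielskian of `C₅`, is triangle-free with chromatic number `4`.
Pulling it back along a surjection `f` from `Fin n` blows every vertex `a` up into an independent
set of size `#(f⁻¹ a)`: this keeps triangle-freeness and the chromatic number, and the number of
edges becomes `∑_{ab} #(f⁻¹ a) #(f⁻¹ b)` over the edges `ab`. Blowing up the apex into `t` vertices
and one shadow vertex (adjacent to two rim vertices and the apex) into `s` vertices gives
`13 + 2s + 4t + st = (s + 4)(t + 2) + 5` edges on `s + t + 9` vertices, and the product is
`⌊(n - 3)² / 4⌋` for `s + 4 = ⌊(n - 3) / 2⌋`.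
-/

open Finset SimpleGraph

theorem Fintype.sum_comp_eq_sum_card_fiber_mul {V W : Type*} [Fintype V] [Fintype W]
    [DecidableEq W] (f : V → W) (g : W → ℕ) : ∑ v, g (f v) = ∑ a, #{v | f v = a} * g a := by
  rw [← Finset.sum_fiberwise' univ f g]
  simp

theorem Fintype.exists_card_fiber_eq {V W : Type*} [Fintype V] [Fintype W] [DecidableEq W]
    (m : W → ℕ) (hm : ∑ a, m a = Fintype.card V) : ∃ f : V → W, ∀ a, #{v | f v = a} = m a := by
  let e : V ≃ Σ a, Fin (m a) := Fintype.equivOfCardEq (by simp [hm])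
  refine ⟨fun v => (e v).1, fun a => ?_⟩
  rw [show #{v | (e v).1 = a} = #({x | x.1 = a} : Finset (Σ b, Fin (m b))) from
    Finset.card_equiv e (by simp), ← Fintype.card_subtype,
    Fintype.card_congr (Equiv.sigmaSubtype a), Fintype.card_fin]

theorem Nat.div_two_mul_sub_div_two (N : ℕ) : N / 2 * (N - N / 2) = N ^ 2 / 4 := by
  obtain ⟨q, rfl | rfl⟩ := Nat.even_or_odd' N
  · rw [show 2 * q / 2 = q by omega, show 2 * q - q = q by omega,
      show (2 * q) ^ 2 = q * q * 4 by ring, Nat.mul_div_cancel _ (by norm_num)]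
  · rw [show (2 * q + 1) / 2 = q by omega, show 2 * q + 1 - q = q + 1 by omega,
      show (2 * q + 1) ^ 2 = q * (q + 1) * 4 + 1 by ring]
    omega

namespace SimpleGraph

variable {V W : Type*}

theorem CliqueFree.of_hom {G : SimpleGraph V} {H : SimpleGraph W} {n : ℕ} (φ : G →g H)
    (h : H.CliqueFree n) : G.CliqueFree n := by
  by_contra hG
  obtain ⟨ψ⟩ := (not_cliqueFree_iff_top_isContained n).mp hG
  exact (not_cliqueFree_iff_top_isContained n).mpr
    ⟨⟨φ.comp ψ.toHom, Hom.injective_of_top_hom _⟩⟩ h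

theorem chromaticNumber_comap_of_surjective (H : SimpleGraph W) {f : V → W}
    (hf : f.Surjective) : (H.comap f).chromaticNumber = H.chromaticNumber := by
  refine le_antisymm (chromaticNumber_mono_of_hom (Hom.comap f H))
    (chromaticNumber_mono_of_hom ⟨Function.surjInv hf, fun h => ?_⟩)
  simpa [Function.surjInv_eq hf] using h

theorem two_mul_ncard_edgeSet_comap [Fintype V] [Fintype W] [DecidableEq W]
    (H : SimpleGraph W) [DecidableRel H.Adj] (f : V → W) :
    2 * (H.comap f).edgeSet.ncard =
      ∑ a, ∑ b, if H.Adj a b then #{v | f v = a} * #{v | f v = b} else 0 := by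
  classical
  rw [← coe_edgeFinset, Set.ncard_coe_finset, ← sum_degrees_eq_twice_card_edges]
  have hdeg (v : V) :
      (H.comap f).degree v = ∑ b, if H.Adj (f v) b then #{u | f u = b} else 0 := by
    rw [← card_neighborFinset_eq_degree, neighborFinset_eq_filter, card_filter]
    simpa using Fintype.sum_comp_eq_sum_card_fiber_mul f fun b => if H.Adj (f v) b then 1 else 0
  simp_rw [hdeg, Fintype.sum_comp_eq_sum_card_fiber_mul f
    fun a => ∑ b, if H.Adj a b then #{u | f u = b} else 0, mul_sum, mul_ite, mul_zero]

/-- `none` is the apex, `some (.inl v)` is the copy of `v` and `some (.inr v)` its shadow. -/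
def mycielskian (G : SimpleGraph V) : SimpleGraph (Option (V ⊕ V)) where
  Adj
    | some (.inl u), some (.inl v) => G.Adj u v
    | some (.inl u), some (.inr v) => G.Adj u v
    | some (.inr u), some (.inl v) => G.Adj u v
    | none, some (.inr _) => True
    | some (.inr _), none => True
    | _, _ => False
  symm := ⟨by rintro (_ | _ | _) (_ | _ | _) h <;> first | exact G.adj_symm h | trivial⟩
  loopless := ⟨by rintro (_ | _ | _) h <;> first | exact G.irrefl h | exact h⟩

variable {G : SimpleGraph V}

instance [DecidableRel G.Adj] : DecidableRel G.mycielskian.Adj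
  | some (.inl u), some (.inl v) => inferInstanceAs (Decidable (G.Adj u v))
  | some (.inl u), some (.inr v) => inferInstanceAs (Decidable (G.Adj u v))
  | some (.inr u), some (.inl v) => inferInstanceAs (Decidable (G.Adj u v))
  | none, some (.inr _) => inferInstanceAs (Decidable True)
  | some (.inr _), none => inferInstanceAs (Decidable True)
  | none, none => inferInstanceAs (Decidable False)
  | none, some (.inl _) => inferInstanceAs (Decidable False)
  | some (.inl _), none => inferInstanceAs (Decidable False)
  | some (.inr _), some (.inr _) => inferInstanceAs (Decidable False)

theorem CliqueFree.mycielskian (h : G.CliqueFree 3) : G.mycielskian.CliqueFree 3 := by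
  classical
  have triangle_free (u v w : V) (huv : G.Adj u v) (huw : G.Adj u w) (hvw : G.Adj v w) : False :=
    h {u, v, w} (is3Clique_triple_iff.mpr ⟨huv, huw, hvw⟩)
  intro s hs
  obtain ⟨a, b, c, hab, hac, hbc, -⟩ := is3Clique_iff.mp hs
  rcases a with _ | a | a <;> rcases b with _ | b | b <;> rcases c with _ | c | c <;>
    simp only [SimpleGraph.mycielskian] at hab hac hbc
  all_goals exact triangle_free a b c hab hac hbc

def Coloring.mycielskian {α : Type*} (c : G.Coloring α) : G.mycielskian.Coloring (Option α) :=
  Coloring.mk (fun | none => none | some (.inl v) => some (c v) | some (.inr v) => some (c v)) <| by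
    rintro (_ | _ | _) (_ | _ | _) h <;> simp_all [SimpleGraph.mycielskian, c.valid]

theorem Colorable.mycielskian {k : ℕ} (h : G.Colorable k) : G.mycielskian.Colorable (k + 1) := by
  obtain ⟨c⟩ := h
  simpa using c.mycielskian.colorable

/-- Recolour each vertex of `G` that carries the apex colour with the colour of its shadow,
which is adjacent to the apex. -/
theorem Colorable.of_mycielskian {k : ℕ} (h : G.mycielskian.Colorable (k + 1)) :
    G.Colorable k := by
  obtain ⟨c⟩ := h
  have hshadow (v : V) : c (some (.inr v)) ≠ c none := c.valid trivial
  let c' : G.Coloring {x // x ≠ c none} := Coloring.mk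
    (fun v => if hv : c (some (.inl v)) = c none then ⟨_, hshadow v⟩ else ⟨_, hv⟩) <| by
    intro u v huv
    have h1 : c (some (.inl u)) ≠ c (some (.inl v)) := c.valid huv
    have h2 : c (some (.inr u)) ≠ c (some (.inl v)) := c.valid huv
    have h3 : c (some (.inl u)) ≠ c (some (.inr v)) := c.valid huv
    split_ifs <;> simp_all
  simpa using c'.colorable

theorem chromaticNumber_mycielskian {k : ℕ} (h : G.chromaticNumber = k + 1) :
    G.mycielskian.chromaticNumber = k + 2 := by
  rw [chromaticNumber_eq_iff_colorable_not_colorable] at h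
  rw [show (k : ℕ∞) + 2 = ↑(k + 1) + 1 by push_cast; ring,
    chromaticNumber_eq_iff_colorable_not_colorable]
  exact ⟨h.1.mycielskian, fun h' => h.2 h'.of_mycielskian⟩

abbrev grotzsch : SimpleGraph (Option (Fin 5 ⊕ Fin 5)) := (cycleGraph 5).mycielskian

theorem grotzsch_cliqueFree : grotzsch.CliqueFree 3 := by
  refine CliqueFree.mycielskian fun s hs => ?_
  obtain ⟨a, b, c, hab, hac, hbc, -⟩ := is3Clique_iff.mp hs
  revert a b c
  decide

theorem chromaticNumber_grotzsch : grotzsch.chromaticNumber = 4 := by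
  rw [chromaticNumber_mycielskian (k := 2)
    (chromaticNumber_cycleGraph_of_odd 5 (by norm_num) (by decide))]
  norm_num

def grotzschWeight (s t : ℕ) : Option (Fin 5 ⊕ Fin 5) → ℕ
  | none => t
  | some (.inr 0) => s
  | _ => 1

theorem grotzschWeight_pos {s t : ℕ} (hs : 0 < s) (ht : 0 < t) (a : Option (Fin 5 ⊕ Fin 5)) :
    0 < grotzschWeight s t a := by
  unfold grotzschWeight
  split <;> omega

theorem sum_grotzschWeight (s t : ℕ) : ∑ a, grotzschWeight s t a = s + t + 9 := by
  simp [Fintype.sum_option, Fintype.sum_sum_type, Fin.sum_univ_five, grotzschWeight]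
  ring

theorem sum_adj_grotzschWeight (s t : ℕ) :
    ∑ a, ∑ b, (if grotzsch.Adj a b then grotzschWeight s t a * grotzschWeight s t b else 0) =
      2 * ((s + 4) * (t + 2) + 5) := by
  simp +decide [Fintype.sum_option, Fintype.sum_sum_type, Fin.sum_univ_five, grotzschWeight,
    SimpleGraph.mycielskian, cycleGraph_adj]
  ring

end SimpleGraph

theorem stmt_2 (n : ℕ) (hn : 13 ≤ n) :
    ∃ G : SimpleGraph (Fin n), G.CliqueFree 3 ∧ G.chromaticNumber = 4 ∧
      G.edgeSet.ncard = (n - 3) ^ 2 / 4 + 5 := by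
  set s := (n - 3) / 2 - 4
  set t := n - 9 - s
  have hproduct : (s + 4) * (t + 2) = (n - 3) ^ 2 / 4 := by
    rw [← Nat.div_two_mul_sub_div_two, show s + 4 = (n - 3) / 2 by omega,
      show t + 2 = n - 3 - (n - 3) / 2 by omega]
  obtain ⟨f, hf⟩ := Fintype.exists_card_fiber_eq (V := Fin n) (grotzschWeight s t)
    (by rw [sum_grotzschWeight, Fintype.card_fin]; omega)
  have hsurj : f.Surjective := fun a => by
    obtain ⟨v, hv⟩ := card_pos.mp (hf a ▸ grotzschWeight_pos (by omega) (by omega) a)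
    exact ⟨v, (mem_filter.mp hv).2⟩
  refine ⟨grotzsch.comap f, grotzsch_cliqueFree.of_hom (Hom.comap f _), ?_, ?_⟩
  · rw [chromaticNumber_comap_of_surjective _ hsurj, chromaticNumber_grotzsch]
  · have hedges := two_mul_ncard_edgeSet_comap grotzsch f
    simp only [hf, sum_adj_grotzschWeight, hproduct] at hedges
    omega
end

section
/- Let G be a triangle-free simple graph. If there exists a set T of at most 2 vertices such that G − T is bipartite (i.e., d_2(G) ≤ 2), then the chromatic number of G is at most 3. -/
/-!
Let `T` be the deleted set, with `G - T` properly 2-coloured. If `T` is independent, give it a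
third colour. Otherwise `T = {a, b}` with `a ~ b`. Since `G` is triangle-free, the neighbourhood
`N(b)` is independent and contains `a`; in `G - N(b)` the vertex `b` is isolated and every other
vertex lies outside `T`, so `G - N(b)` is 2-colourable and `N(b)` takes the third colour.
-/

namespace SimpleGraph

variable {V : Type*} {G : SimpleGraph V} {n : ℕ}

theorem IsIndepSet.colorable_succ {s : Set V} (hs : G.IsIndepSet s)
    (h : (G.induce sᶜ).Colorable n) : G.Colorable (n + 1) := by
  classical
  obtain ⟨C⟩ := h
  refine ⟨Coloring.mk (fun v ↦ if hv : v ∈ sᶜ then (C ⟨v, hv⟩).castSucc else Fin.last n) ?_⟩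
  intro u v huv
  by_cases hu : u ∈ sᶜ <;> by_cases hv : v ∈ sᶜ <;> simp only [hu, hv, dite_true, dite_false]
  · exact fun heq ↦ C.valid (G := G.induce sᶜ) (v := ⟨u, hu⟩) (w := ⟨v, hv⟩) huv
      (Fin.castSucc_injective n heq)
  · exact (Fin.castSucc_lt_last _).ne
  · exact (Fin.castSucc_lt_last _).ne'
  · exact absurd huv (hs (not_not.mp hu) (not_not.mp hv) huv.ne)

theorem Colorable.induce_insert_of_forall_not_adj {s : Set V} {v : V}
    (h : (G.induce s).Colorable n) (hn : n ≠ 0) (hv : ∀ w ∈ s, ¬G.Adj v w) :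
    (G.induce (insert v s)).Colorable n := by
  classical
  obtain ⟨C⟩ := h
  refine ⟨Coloring.mk (fun x ↦ if hx : x.1 ∈ s then C ⟨x, hx⟩ else ⟨0, Nat.pos_of_ne_zero hn⟩) ?_⟩
  rintro ⟨x, hx⟩ ⟨y, hy⟩ hxy
  have hxy' : G.Adj x y := hxy
  by_cases hxs : x ∈ s <;> by_cases hys : y ∈ s
  · simpa [hxs, hys] using C.valid (G := G.induce s) (v := ⟨x, hxs⟩) (w := ⟨y, hys⟩) hxy'
  · obtain rfl : y = v := (Set.mem_insert_iff.mp hy).resolve_right hys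
    exact absurd hxy'.symm (hv x hxs)
  · obtain rfl : x = v := (Set.mem_insert_iff.mp hx).resolve_right hxs
    exact absurd hxy' (hv y hys)
  · obtain rfl : x = v := (Set.mem_insert_iff.mp hx).resolve_right hxs
    obtain rfl : y = x := (Set.mem_insert_iff.mp hy).resolve_right hys
    exact absurd rfl hxy'.ne

theorem Colorable.induce_mono {s t : Set V} (hst : t ⊆ s) (h : (G.induce s).Colorable n) :
    (G.induce t).Colorable n :=
  h.of_hom (G.induceHomOfLE hst).toHom

end SimpleGraph

open SimpleGraph

theorem stmt_8 {V : Type*} [Fintype V] (G : SimpleGraph V)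
    (htf : G.CliqueFree 3)
    (hd2 : ∃ T : Set V, T.ncard ≤ 2 ∧ (G.induce Tᶜ).Colorable 2) :
    G.chromaticNumber ≤ 3 := by
  obtain ⟨T, hT, hC⟩ := hd2
  suffices h : G.Colorable 3 by exact_mod_cast h.chromaticNumber_le
  by_cases hind : G.IsIndepSet T
  · exact hind.colorable_succ hC
  obtain ⟨a, ha, b, hb, -, hab⟩ : ∃ a ∈ T, ∃ b ∈ T, a ≠ b ∧ G.Adj a b := by
    simpa [isIndepSet_iff, Set.Pairwise] using hind
  have hTab : T = {a, b} :=
    (Set.eq_of_subset_of_ncard_le (Set.pair_subset ha hb) (by rwa [Set.ncard_pair hab.ne])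
      T.toFinite).symm
  refine (isIndepSet_neighborSet_of_triangleFree G htf b).colorable_succ ?_
  have hrest : (G.induce (G.neighborSet b ∪ T)ᶜ).Colorable 2 :=
    hC.induce_mono (Set.compl_subset_compl.mpr Set.subset_union_right)
  have hcover : (G.neighborSet b)ᶜ ⊆ insert b (G.neighborSet b ∪ T)ᶜ := by
    intro w (hbw : ¬G.Adj b w)
    have hwa : w ≠ a := by rintro rfl; exact hbw hab.symm
    by_cases hwb : w = b
    · exact Or.inl hwb
    · exact Or.inr (by simp [hbw, hTab, hwa, hwb])
  exact (hrest.induce_insert_of_forall_not_adj two_ne_zero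
    fun w hw hbw ↦ hw (Or.inl hbw)).induce_mono hcover
end

section
/- Let H be a triangle-free simple graph with at least one edge. Then τ(H) < 2ν(H), where τ(H) is the vertex cover number and ν(H) is the matching number of H. -/
/-!
Take a maximum matching `M` and let `S` be the set of its `2ν` matched vertices; by maximality
`S` is a vertex cover. For an edge `ab ∈ M`, if `a` and `b` both had unmatched neighbours `x` and
`y`, then `x = y` would close a triangle and `x ≠ y` would give the augmenting path `x a b y`.
So one endpoint `d` has only matched neighbours, and `S \ {d}` is a vertex cover of size `2ν - 1`.
-/

/-- A matching of `H`, given as a set of pairwise vertex-disjoint edges of `H`. -/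
def IsMatchingSet {V : Type*} (H : SimpleGraph V) (M : Finset (Sym2 V)) : Prop :=
  ↑M ⊆ H.edgeSet ∧ (M : Set (Sym2 V)).Pairwise fun e f => ∀ v, v ∈ e → v ∉ f

/-- The matching number of `H`: the maximum number of pairwise disjoint edges. -/
noncomputable def matchingNumber {V : Type*} [Fintype V] (H : SimpleGraph V) : ℕ :=
  sSup {k : ℕ | ∃ M : Finset (Sym2 V), IsMatchingSet H M ∧ M.card = k}

/-- A vertex cover of `H`: a set of vertices meeting every edge. -/
def IsVertexCover {V : Type*} (H : SimpleGraph V) (C : Set V) : Prop :=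
  ∀ e ∈ H.edgeSet, ∃ v ∈ C, v ∈ e

/-- The vertex cover number of `H`: minimum size of a vertex cover. -/
noncomputable def coverNumber {V : Type*} [Fintype V] (H : SimpleGraph V) : ℕ :=
  sInf {k : ℕ | ∃ C : Set V, IsVertexCover H C ∧ C.ncard = k}

section

variable {V : Type*} {H : SimpleGraph V} {M : Finset (Sym2 V)} {e : Sym2 V}

lemma coverNumber_le_ncard [Fintype V] {C : Set V} (hC : IsVertexCover H C) :
    coverNumber H ≤ C.ncard :=
  Nat.sInf_le ⟨C, hC, rfl⟩

lemma notMem_of_forall_notMem (hdisj : ∀ f ∈ M, ∀ v ∈ e, v ∉ f) : e ∉ M :=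
  fun he => hdisj e he _ e.out_fst_mem e.out_fst_mem

def matchedVertices [DecidableEq V] (M : Finset (Sym2 V)) : Finset V :=
  M.biUnion Sym2.toFinset

lemma mem_matchedVertices [DecidableEq V] {v : V} :
    v ∈ matchedVertices M ↔ ∃ e ∈ M, v ∈ e := by
  simp [matchedVertices, Sym2.mem_toFinset]

namespace IsMatchingSet

lemma singleton (he : e ∈ H.edgeSet) : IsMatchingSet H {e} :=
  ⟨by simpa using he, by simp⟩

lemma mono {M' : Finset (Sym2 V)} (hM : IsMatchingSet H M) (h : M' ⊆ M) :
    IsMatchingSet H M' :=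
  ⟨(Finset.coe_subset.2 h).trans hM.1, hM.2.mono (Finset.coe_subset.2 h)⟩

lemma insert [DecidableEq V] (hM : IsMatchingSet H M) (he : e ∈ H.edgeSet)
    (hdisj : ∀ f ∈ M, ∀ v ∈ e, v ∉ f) : IsMatchingSet H (insert e M) := by
  refine ⟨?_, ?_⟩
  · rw [Finset.coe_insert]
    exact Set.insert_subset he hM.1
  · rw [Finset.coe_insert, Set.pairwise_insert]
    exact ⟨hM.2, fun f hf _ => ⟨hdisj f hf, fun v hvf hve => hdisj f hf v hve hvf⟩⟩

lemma card_matchedVertices [DecidableEq V] (hM : IsMatchingSet H M) :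
    (matchedVertices M).card = 2 * M.card := by
  have hdisj : (M : Set (Sym2 V)).PairwiseDisjoint Sym2.toFinset :=
    fun e he f hf hef => Finset.disjoint_left.2 fun v hve hvf =>
      hM.2 he hf hef v (Sym2.mem_toFinset.1 hve) (Sym2.mem_toFinset.1 hvf)
  rw [matchedVertices, Finset.card_biUnion hdisj, Finset.sum_congr rfl fun e he =>
    Sym2.card_toFinset_of_not_isDiag e (H.not_isDiag_of_mem_edgeSet (hM.1 he))]
  simp [mul_comm]

end IsMatchingSet

def IsMaximumMatching (H : SimpleGraph V) (M : Finset (Sym2 V)) : Prop :=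
  IsMatchingSet H M ∧ ∀ M', IsMatchingSet H M' → M'.card ≤ M.card

lemma exists_isMaximumMatching_card_eq [Fintype V] (H : SimpleGraph V) :
    ∃ M, IsMaximumMatching H M ∧ M.card = matchingNumber H := by
  classical
  have hne : {k | ∃ M : Finset (Sym2 V), IsMatchingSet H M ∧ M.card = k}.Nonempty :=
    ⟨0, ∅, ⟨by simp, by simp⟩, rfl⟩
  have hbdd : BddAbove {k | ∃ M : Finset (Sym2 V), IsMatchingSet H M ∧ M.card = k} :=
    ⟨Fintype.card (Sym2 V), by rintro k ⟨M, -, rfl⟩; exact Finset.card_le_univ M⟩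
  obtain ⟨M, hM, hcard⟩ := Nat.sSup_mem hne hbdd
  exact ⟨M, ⟨hM, fun M' hM' => hcard ▸ le_csSup hbdd ⟨M', hM', rfl⟩⟩, hcard⟩

namespace IsMaximumMatching

lemma nonempty (hM : IsMaximumMatching H M) (hne : H.edgeSet.Nonempty) : M.Nonempty := by
  obtain ⟨e, he⟩ := hne
  exact Finset.card_pos.1 (hM.2 {e} (IsMatchingSet.singleton he))

variable [DecidableEq V]

lemma mem_or_mem_of_adj (hM : IsMaximumMatching H M) {u w : V} (huw : H.Adj u w) :
    u ∈ matchedVertices M ∨ w ∈ matchedVertices M := by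
  by_contra! h
  have hdisj : ∀ f ∈ M, ∀ v ∈ s(u, w), v ∉ f := by
    rintro f hf v hv hvf
    rcases Sym2.mem_iff.1 hv with rfl | rfl
    exacts [h.1 (mem_matchedVertices.2 ⟨f, hf, hvf⟩), h.2 (mem_matchedVertices.2 ⟨f, hf, hvf⟩)]
  have := hM.2 _ (hM.1.insert huw hdisj)
  rw [Finset.card_insert_of_notMem (notMem_of_forall_notMem hdisj)] at this
  omega

lemma eq_of_adj_of_notMem_matchedVertices (hM : IsMaximumMatching H M) {a b x y : V}
    (hab : s(a, b) ∈ M) (hax : H.Adj a x) (hby : H.Adj b y)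
    (hx : x ∉ matchedVertices M) (hy : y ∉ matchedVertices M) : x = y := by
  by_contra hxy
  have hmatched : ∀ {u}, u ∈ s(a, b) → u ∈ matchedVertices M :=
    fun hu => mem_matchedVertices.2 ⟨_, hab, hu⟩
  have hdisj_erase : ∀ {u z}, u ∈ s(a, b) → z ∉ matchedVertices M →
      ∀ f ∈ M.erase s(a, b), ∀ v ∈ s(u, z), v ∉ f := by
    intro u z hu hz f hf v hv hvf
    rcases Sym2.mem_iff.1 hv with rfl | rfl
    · exact hM.1.2 hab (Finset.mem_of_mem_erase hf) (Finset.ne_of_mem_erase hf).symm v hu hvf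
    · exact hz (mem_matchedVertices.2 ⟨f, Finset.mem_of_mem_erase hf, hvf⟩)
  have hdisj_by := hdisj_erase (Sym2.mem_mk_right a b) hy
  have hdisj_ax : ∀ f ∈ insert s(b, y) (M.erase s(a, b)), ∀ v ∈ s(a, x), v ∉ f := by
    intro f hf
    rcases Finset.mem_insert.1 hf with rfl | hf
    · intro v hv hvf
      have hb := hmatched (Sym2.mem_mk_right a b)
      have ha := hmatched (Sym2.mem_mk_left a b)
      rcases Sym2.mem_iff.1 hv with rfl | rfl <;> rcases Sym2.mem_iff.1 hvf with h | h <;>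
        subst h
      exacts [(H.ne_of_adj (hM.1.1 hab)) rfl, hy ha, hx hb, hxy rfl]
    · exact hdisj_erase (Sym2.mem_mk_left a b) hx f hf
  have hcard_le := hM.2 _
    (((hM.1.mono (Finset.erase_subset _ _)).insert hby hdisj_by).insert hax hdisj_ax)
  rw [Finset.card_insert_of_notMem (notMem_of_forall_notMem hdisj_ax),
    Finset.card_insert_of_notMem (notMem_of_forall_notMem hdisj_by),
    Finset.card_erase_of_mem hab] at hcard_le
  have hcard_pos := Finset.card_pos.2 ⟨_, hab⟩
  omega

lemma exists_forall_adj_mem_matchedVertices (hM : IsMaximumMatching H M)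
    (htf : H.CliqueFree 3) (hne : H.edgeSet.Nonempty) :
    ∃ d ∈ matchedVertices M, ∀ y, H.Adj d y → y ∈ matchedVertices M := by
  obtain ⟨e, he⟩ := hM.nonempty hne
  induction e using Sym2.ind with
  | _ a b =>
  by_contra! h
  obtain ⟨x, hax, hx⟩ := h a (mem_matchedVertices.2 ⟨_, he, Sym2.mem_mk_left a b⟩)
  obtain ⟨y, hby, hy⟩ := h b (mem_matchedVertices.2 ⟨_, he, Sym2.mem_mk_right a b⟩)
  obtain rfl := hM.eq_of_adj_of_notMem_matchedVertices he hax hby hx hy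
  exact htf {a, b, x} (SimpleGraph.is3Clique_triple_iff.2 ⟨hM.1.1 he, hax, hby⟩)

lemma isVertexCover_erase (hM : IsMaximumMatching H M) {d : V}
    (hd : ∀ y, H.Adj d y → y ∈ matchedVertices M) :
    IsVertexCover H ↑((matchedVertices M).erase d) := by
  have hcover : ∀ u w, H.Adj u w → u ∈ matchedVertices M →
      ∃ v ∈ ((matchedVertices M).erase d : Set V), v ∈ s(u, w) := by
    intro u w huw hu
    by_cases hud : u = d
    · subst hud
      exact ⟨w, Finset.mem_erase.2 ⟨huw.ne.symm, hd w huw⟩, Sym2.mem_mk_right u w⟩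
    · exact ⟨u, Finset.mem_erase.2 ⟨hud, hu⟩, Sym2.mem_mk_left u w⟩
  intro e he
  induction e using Sym2.ind with
  | _ u w =>
  rcases hM.mem_or_mem_of_adj he with hu | hw
  · exact hcover u w he hu
  · rw [Sym2.eq_swap]
    exact hcover w u he.symm hw

end IsMaximumMatching

end

theorem stmt_15 {V : Type*} [Fintype V] (H : SimpleGraph V)
    (htf : H.CliqueFree 3) (hne : H.edgeSet.Nonempty) :
    coverNumber H < 2 * matchingNumber H := by
  classical
  obtain ⟨M, hM, hcard⟩ := exists_isMaximumMatching_card_eq H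
  obtain ⟨d, hdM, hd⟩ := hM.exists_forall_adj_mem_matchedVertices htf hne
  calc coverNumber H ≤ (((matchedVertices M).erase d : Finset V) : Set V).ncard :=
        coverNumber_le_ncard (hM.isVertexCover_erase hd)
    _ < (matchedVertices M).card := by
        rw [Set.ncard_coe_finset]
        exact Finset.card_erase_lt_of_mem hdM
    _ = 2 * matchingNumber H := by rw [hM.1.card_matchedVertices, hcard]
end

section
/- Let G be a triangle-free simple graph on n vertices whose vertex set is partitioned into two sets X and Y. Suppose that the set of edges of G having both endpoints in X or both endpoints in Y is exactly the edge set of a 7-cycle all of whose vertices lie in X. Then e(G) ≤ (n−4)²/4 + 7. -/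
/-!
Apart from the seven cycle edges, every edge joins `Y` to `X`. A vertex `y ∈ Y` sees no two
consecutive vertices of the cycle (they would form a triangle with `y`), hence at most three of
them, so `deg y ≤ |X| - 4`. Thus `e(G) ≤ 7 + |Y| (|X| - 4) ≤ 7 + (n - 4)² / 4` by AM-GM.
-/

open Finset SimpleGraph

theorem Finset.two_mul_card_le_of_forall_apply_notMem {α : Type*} [Fintype α] [DecidableEq α]
    (σ : Equiv.Perm α) {I : Finset α} (h : ∀ i ∈ I, σ i ∉ I) :
    2 * #I ≤ Fintype.card α := by
  have hdisj : Disjoint I (I.map σ.toEmbedding) := by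
    simp only [disjoint_left, mem_map_equiv]
    intro i hi hσ
    exact h _ hσ (by simpa using hi)
  calc 2 * #I = #(I ∪ I.map σ.toEmbedding) := by
        rw [card_union_of_disjoint hdisj, card_map]; ring
    _ ≤ Fintype.card α := card_le_univ _

namespace SimpleGraph

variable {V : Type*} {G : SimpleGraph V}

namespace Walk

variable {x : V} {C : G.Walk x x}

lemma IsCycle.injective_getVert (hC : C.IsCycle) :
    Function.Injective fun i : Fin C.length => C.getVert i := by
  intro i j hij
  exact Fin.ext <| hC.getVert_injOn' (by simp; omega) (by simp; omega) hij

lemma adj_getVert_add_one_mod (C : G.Walk x x) (i : Fin C.length) :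
    G.Adj (C.getVert i) (C.getVert ((i + 1) % C.length)) := by
  rcases (show (i : ℕ) + 1 ≤ C.length from i.isLt).lt_or_eq with h | h
  · rw [Nat.mod_eq_of_lt h]
    exact C.adj_getVert_succ i.isLt
  · have := C.adj_getVert_succ i.isLt
    rw [h, Nat.mod_self, getVert_zero]
    rwa [h, getVert_length] at this

lemma support_toFinset_eq_image_getVert [DecidableEq V] (hC : 0 < C.length) :
    C.support.toFinset = univ.image fun i : Fin C.length => C.getVert i := by
  ext v
  simp only [List.mem_toFinset, mem_support_iff_exists_getVert, mem_image, mem_univ, true_and]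
  constructor
  · rintro ⟨n, rfl, hn⟩
    rcases hn.lt_or_eq with hn | rfl
    · exact ⟨⟨n, hn⟩, rfl⟩
    · exact ⟨⟨0, hC⟩, by simp⟩
  · rintro ⟨i, rfl⟩
    exact ⟨i, rfl, i.isLt.le⟩

lemma IsCycle.card_support_toFinset [DecidableEq V] (hC : C.IsCycle) :
    #C.support.toFinset = C.length := by
  rw [support_toFinset_eq_image_getVert (by have := hC.three_le_length; omega),
    card_image_of_injective _ hC.injective_getVert, card_univ, Fintype.card_fin]

end Walk

/-- Rotating the cycle by one step maps the neighbours of `y` on it to non-neighbours. -/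
lemma CliqueFree.two_mul_card_neighborFinset_inter_support_le [DecidableEq V] [Fintype V]
    [DecidableRel G.Adj] (hG : G.CliqueFree 3) {x : V} {C : G.Walk x x} (hC : C.IsCycle) (y : V) :
    2 * #(G.neighborFinset y ∩ C.support.toFinset) ≤ C.length := by
  have hlen := hC.three_le_length
  have : NeZero C.length := ⟨by omega⟩
  set I := univ.filter fun i : Fin C.length => G.Adj y (C.getVert i)
  have hI : ∀ i ∈ I, Equiv.addRight 1 i ∉ I := by
    intro i hi hi1
    simp only [I, mem_filter, mem_univ, true_and, Equiv.coe_addRight, Fin.val_add, Fin.val_one',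
      Nat.mod_eq_of_lt (by omega : 1 < C.length)] at hi hi1
    exact hG _ (is3Clique_triple_iff.mpr ⟨hi, hi1, C.adj_getVert_add_one_mod i⟩)
  have hsub : G.neighborFinset y ∩ C.support.toFinset ⊆
      I.image fun i : Fin C.length => C.getVert i := by
    rw [Walk.support_toFinset_eq_image_getVert (by omega)]
    intro v
    simp only [mem_inter, mem_neighborFinset, mem_image, mem_univ, true_and, I, mem_filter]
    rintro ⟨hyv, i, rfl⟩
    exact ⟨i, hyv, rfl⟩
  calc 2 * #(G.neighborFinset y ∩ C.support.toFinset)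
      ≤ 2 * #I := Nat.mul_le_mul_left 2 ((card_le_card hsub).trans card_image_le)
    _ ≤ C.length := by simpa using two_mul_card_le_of_forall_apply_notMem _ hI

lemma degree_add_card_le [Fintype V] [DecidableEq V] [DecidableRel G.Adj] {y : V}
    {A S : Finset V} (hN : G.neighborFinset y ⊆ A) (hS : S ⊆ A) :
    G.degree y + #S ≤ #A + #(G.neighborFinset y ∩ S) := by
  have h1 := card_sdiff_add_card_inter (G.neighborFinset y) S
  have h2 : #(G.neighborFinset y \ S) ≤ #(A \ S) := card_le_card (sdiff_subset_sdiff hN le_rfl)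
  have h3 := card_sdiff_add_card_inter A S
  rw [inter_eq_right.mpr hS] at h3
  rw [← card_neighborFinset_eq_degree]
  omega

lemma card_edgeFinset_le_card_add_sum_degree [Fintype V] [DecidableEq V] [DecidableRel G.Adj]
    (E : Finset (Sym2 V)) (Y : Finset V)
    (h : ∀ e ∈ G.edgeSet, e ∈ E ∨ ∃ y ∈ Y, y ∈ e) :
    #G.edgeFinset ≤ #E + ∑ y ∈ Y, G.degree y := by
  have hsub : G.edgeFinset ⊆ E ∪ Y.biUnion fun y => G.incidenceFinset y := by
    intro e he
    rcases h e (mem_edgeFinset.mp he) with hE | ⟨y, hy, hye⟩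
    · exact mem_union_left _ hE
    · refine mem_union_right _ (mem_biUnion.mpr ⟨y, hy, ?_⟩)
      exact (mem_incidenceFinset _ _ _).mpr ⟨mem_edgeFinset.mp he, hye⟩
  calc #G.edgeFinset ≤ #E + #(Y.biUnion fun y => G.incidenceFinset y) :=
        (card_le_card hsub).trans (card_union_le _ _)
    _ ≤ #E + ∑ y ∈ Y, G.degree y := by
      gcongr
      exact card_biUnion_le.trans (sum_le_sum fun y _ => (card_incidenceFinset_eq_degree G y).le)

lemma CliqueFree.two_mul_degree_add_length_le [DecidableEq V] [Fintype V] [DecidableRel G.Adj]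
    (hG : G.CliqueFree 3) {x : V} {C : G.Walk x x} (hC : C.IsCycle) {y : V} {A : Finset V}
    (hN : G.neighborFinset y ⊆ A) (hS : C.support.toFinset ⊆ A) :
    2 * G.degree y + C.length ≤ 2 * #A := by
  have h1 := degree_add_card_le hN hS
  have h2 := hG.two_mul_card_neighborFinset_inter_support_le hC y
  rw [hC.card_support_toFinset] at h1
  omega

end SimpleGraph

theorem stmt_17 {V : Type*} [Fintype V] (G : SimpleGraph V) [DecidableRel G.Adj]
    (htf : G.CliqueFree 3) (X Y : Set V)
    (hcov : X ∪ Y = Set.univ) (hdisj : Disjoint X Y)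
    (x : V) (C : G.Walk x x) (hC : C.IsCycle) (hlen : C.length = 7)
    (hCX : ∀ v ∈ C.support, v ∈ X)
    (hedges : {e ∈ G.edgeSet | (∀ v ∈ e, v ∈ X) ∨ (∀ v ∈ e, v ∈ Y)} =
      {e : Sym2 V | e ∈ C.edges}) :
    (G.edgeFinset.card : ℝ) ≤ ((Fintype.card V : ℝ) - 4) ^ 2 / 4 + 7 := by
  classical
  set Xf := univ.filter (· ∈ X)
  have hY : ∀ v, v ∈ Y ↔ v ∉ X := fun v =>
    ⟨fun hvY hvX => Set.disjoint_left.mp hdisj hvX hvY,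
      fun hvX => ((Set.mem_union v X Y).mp (hcov ▸ Set.mem_univ v)).resolve_left hvX⟩
  have hcycle :
      ∀ e ∈ G.edgeSet, ((∀ v ∈ e, v ∈ X) ∨ (∀ v ∈ e, v ∉ X)) → e ∈ C.edges :=
    fun e he hmono => (Set.ext_iff.mp hedges e).mp ⟨he, by simpa only [hY] using hmono⟩
  have hnbr : ∀ y ∉ X, G.neighborFinset y ⊆ Xf := by
    intro y hy v hv
    simp only [Xf, mem_filter, mem_univ, true_and]
    by_contra hvX
    have hyv := hcycle s(y, v) ((mem_neighborFinset _ _ _).mp hv) <| Or.inr <| by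
      simpa [Sym2.forall_mem_pair] using ⟨hy, hvX⟩
    exact hy (hCX y (C.fst_mem_support_of_mem_edges hyv))
  have hdeg : ∀ y ∈ Xfᶜ, (G.degree y : ℝ) ≤ #Xf - 4 := by
    intro y hy
    have := htf.two_mul_degree_add_length_le hC (hnbr y (by simpa [Xf] using hy))
      (fun v hv => mem_filter.mpr ⟨mem_univ v, hCX v (List.mem_toFinset.mp hv)⟩)
    have : G.degree y + 4 ≤ #Xf := by omega
    rw [le_sub_iff_add_le]
    exact_mod_cast this
  have hedge : #G.edgeFinset ≤ 7 + ∑ y ∈ Xfᶜ, G.degree y := by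
    have hE : #C.edges.toFinset ≤ 7 := (List.toFinset_card_le _).trans (by simp [hlen])
    refine (card_edgeFinset_le_card_add_sum_degree C.edges.toFinset Xfᶜ ?_).trans (by omega)
    intro e he
    by_cases hmeets : ∃ y ∈ Xfᶜ, y ∈ e
    · exact Or.inr hmeets
    · refine Or.inl (List.mem_toFinset.mpr (hcycle e he (Or.inl fun v hv => ?_)))
      by_contra hvX
      exact hmeets ⟨v, by simpa [Xf] using hvX, hv⟩
  calc (#G.edgeFinset : ℝ) ≤ 7 + ∑ y ∈ Xfᶜ, (G.degree y : ℝ) := by exact_mod_cast hedge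
    _ ≤ 7 + #Xfᶜ * (#Xf - 4) := by
      grw [sum_le_sum hdeg, sum_const, nsmul_eq_mul]
    _ ≤ ((Fintype.card V : ℝ) - 4) ^ 2 / 4 + 7 := by
      have hcard : (#Xf : ℝ) + #Xfᶜ = Fintype.card V := by exact_mod_cast card_add_card_compl Xf
      nlinarith [four_mul_le_sq_add ((#Xf : ℝ) - 4) #Xfᶜ]
end
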